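/- Positivity of the upwind convection operator: let u_h ∈ RT₀ be such that the (constant) divergence of u_h on each triangle is nonnegative, i.e. div(u_h|_K) ≥ 0 for every K ∈ 𝒯_h. Then for every v_h ∈ P₀ one has b_h(u_h, v_h, v_h) ≥ 0. -/

import Mathlib

open scoped RealInnerProductSpace
open MeasureTheory

attribute [local instance] Classical.propDecidable

noncomputable section

/-- The Euclidean plane. -/
abbrev E2 : Type := EuclideanSpace ℝ (Fin 2)

/-- A nondegenerate (closed) triangle of the plane, given by its three
affinely independent vertices. -/
structure Tri : Type where
  vtx : Fin 3 → E2
  indep : AffineIndependent ℝ vtx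

namespace Tri

/-- The triangle as a subset of the plane: the convex hull of its vertices. -/
def carrier (t : Tri) : Set E2 := convexHull ℝ (Set.range t.vtx)

/-- The area `|K|` of the triangle. -/
def area (t : Tri) : ℝ := (volume t.carrier).toReal

/-- The centroid of the triangle. -/
def centroid (t : Tri) : E2 := Finset.centroid ℝ Finset.univ t.vtx

/-- The triangle seen as a 2-simplex. -/
def simplex (t : Tri) : Affine.Simplex ℝ E2 2 := ⟨t.vtx, t.indep⟩

/-- The circumcenter `x_K` of the triangle. -/
def ccenter (t : Tri) : E2 := t.simplex.circumcenter

/-- `σ` (an ordered pair of distinct points) is an edge of the triangle `t`: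
both of its endpoints are vertices of `t`. -/
def hasEdge (t : Tri) (σ : E2 × E2) : Prop :=
  σ.1 ≠ σ.2 ∧ σ.1 ∈ Set.range t.vtx ∧ σ.2 ∈ Set.range t.vtx

end Tri

/-- The segment of an edge. -/
def eseg (σ : E2 × E2) : Set E2 := segment ℝ σ.1 σ.2

/-- The length `|σ|` of an edge. -/
def elen (σ : E2 × E2) : ℝ := dist σ.1 σ.2

/-- The midpoint `x_σ` of an edge. -/
def emid (σ : E2 × E2) : E2 := midpoint ℝ σ.1 σ.2

/-- Rotation by `π/2` in the plane. -/
def perp (x : E2) : E2 := (EuclideanSpace.equiv (Fin 2) ℝ).symm ![-(x 1), x 0]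

/-- The unit normal `n_{K,σ}` to the edge `σ`, pointing outward of the triangle `t`. -/
def Tri.nrm (t : Tri) (σ : E2 × E2) : E2 :=
  if 0 ≤ ⟪perp (σ.2 - σ.1), emid σ - t.centroid⟫
  then (elen σ)⁻¹ • perp (σ.2 - σ.1)
  else -((elen σ)⁻¹ • perp (σ.2 - σ.1))

/-- An admissible triangulation `𝒯_h` of `Ω`, together with a registration of its
edges (each geometric edge is recorded once, with a chosen orientation) and a labelling
`K_σ`, `L_σ` of the triangle(s) adjacent to each edge.  All interior angles of all
triangles are `< π/2`. -/
structure Mesh (Ω : Set E2) : Type where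
  tris : Finset Tri
  tris_nonempty : tris.Nonempty
  edges : Finset (E2 × E2)
  Kof : E2 × E2 → Tri
  Lof : E2 × E2 → Tri
  interior_disjoint : ∀ t₁ ∈ tris, ∀ t₂ ∈ tris, t₁ ≠ t₂ →
    interior t₁.carrier ∩ interior t₂.carrier = ∅
  union_eq : ⋃ t ∈ (tris : Set Tri), t.carrier = closure Ω
  inter_structure : ∀ t₁ ∈ tris, ∀ t₂ ∈ tris, t₁ ≠ t₂ →
    t₁.carrier ∩ t₂.carrier = ∅
    ∨ (∃ a ∈ Set.range t₁.vtx ∩ Set.range t₂.vtx, t₁.carrier ∩ t₂.carrier = {a})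
    ∨ (∃ σ, t₁.hasEdge σ ∧ t₂.hasEdge σ ∧ t₁.carrier ∩ t₂.carrier = eseg σ)
  angles_lt : ∀ t ∈ tris, ∀ i j l : Fin 3, i ≠ j → i ≠ l → j ≠ l →
    EuclideanGeometry.angle (t.vtx j) (t.vtx i) (t.vtx l) < Real.pi / 2
  edges_ne : ∀ σ ∈ edges, σ.1 ≠ σ.2
  edges_cover : ∀ t ∈ tris, ∀ i j : Fin 3, i ≠ j →
    (t.vtx i, t.vtx j) ∈ edges ∨ (t.vtx j, t.vtx i) ∈ edges
  edges_sub : ∀ σ ∈ edges, ∃ t ∈ tris, t.hasEdge σ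
  edges_orient : ∀ σ ∈ edges, Prod.swap σ ∉ edges
  edges_atMostTwo : ∀ σ ∈ edges, (tris.filter fun t => t.hasEdge σ).card ≤ 2
  Kof_mem : ∀ σ ∈ edges, Kof σ ∈ tris ∧ (Kof σ).hasEdge σ
  Lof_mem : ∀ σ ∈ edges, (tris.filter fun t => t.hasEdge σ).card = 2 →
    Lof σ ∈ tris ∧ (Lof σ).hasEdge σ ∧ Lof σ ≠ Kof σ
  ext_frontier : ∀ σ ∈ edges, (tris.filter fun t => t.hasEdge σ).card = 1 →
    eseg σ ⊆ frontier Ω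

namespace Mesh

variable {Ω : Set E2} (M : Mesh Ω)

/-- The interior edges `ℰ_h^int` (shared by exactly two triangles). -/
def intEdges : Finset (E2 × E2) :=
  M.edges.filter fun σ => (M.tris.filter fun t => t.hasEdge σ).card = 2

/-- The boundary edges `ℰ_h^ext`. -/
def extEdges : Finset (E2 × E2) :=
  M.edges.filter fun σ => (M.tris.filter fun t => t.hasEdge σ).card = 1

/-- `d_σ`: distance between the circumcenters of the two triangles sharing `σ`
(interior edges), or from the circumcenter of `K_σ` to the midpoint of `σ`
(boundary edges). -/
def dOf (σ : E2 × E2) : ℝ :=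
  if (M.tris.filter fun t => t.hasEdge σ).card = 2
  then dist (M.Kof σ).ccenter (M.Lof σ).ccenter
  else dist (M.Kof σ).ccenter (emid σ)

/-- `τ_σ = |σ| / d_σ`. -/
def tau (σ : E2 × E2) : ℝ := elen σ / M.dOf σ

/-- The mesh size `h`: the largest diameter of a circumscribed circle. -/
def meshSize : ℝ := M.tris.sup' M.tris_nonempty fun t => 2 * t.simplex.circumradius

/-- Mesh regularity with constant `C_reg`: `d_σ ≥ C_reg |σ|` and `|σ| ≥ C_reg h`. -/
def Regular (Creg : ℝ) : Prop :=
  ∀ σ ∈ M.edges, Creg * elen σ ≤ M.dOf σ ∧ Creg * M.meshSize ≤ elen σ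

/-- For `σ` an edge of `t`, the triangle on the other side of `σ`. -/
def other (t : Tri) (σ : E2 × E2) : Tri := if M.Kof σ = t then M.Lof σ else M.Kof σ

/-- The `L²(Ω)` inner product of two piecewise constant (`P₀`) fields. -/
def l2P0 (v w : Tri → E2) : ℝ := ∑ t ∈ M.tris, t.area * ⟪v t, w t⟫

/-- The `L²(Ω)` norm of a `P₀` field. -/
def l2normP0 (v : Tri → E2) : ℝ := Real.sqrt (M.l2P0 v v)

/-- The discrete `H¹` norm `‖·‖_h` on `P₀`. -/
def normh (v : Tri → E2) : ℝ :=
  Real.sqrt (∑ σ ∈ M.intEdges, M.tau σ * ‖v (M.Lof σ) - v (M.Kof σ)‖ ^ 2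
    + ∑ σ ∈ M.extEdges, M.tau σ * ‖v (M.Kof σ)‖ ^ 2)

/-- A family of affine maps (one per triangle) is in `P₁^{nc}`: the two traces agree
at the midpoint of every interior edge. -/
def IsP1nc (q : Tri → (E2 →ᵃ[ℝ] ℝ)) : Prop :=
  ∀ σ ∈ M.intEdges, q (M.Kof σ) (emid σ) = q (M.Lof σ) (emid σ)

/-- Membership in `L²₀`: the piecewise affine function has zero mean on `Ω`. -/
def MeanZero (q : Tri → (E2 →ᵃ[ℝ] ℝ)) : Prop :=
  ∑ t ∈ M.tris, ∫ x in t.carrier, q t x = 0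

/-- The `L²(Ω)` inner product of two piecewise affine functions. -/
def l2P1 (q r : Tri → (E2 →ᵃ[ℝ] ℝ)) : ℝ :=
  ∑ t ∈ M.tris, ∫ x in t.carrier, q t x * r t x

/-- The `L²(Ω)` norm of a piecewise affine function. -/
def l2normP1 (q : Tri → (E2 →ᵃ[ℝ] ℝ)) : ℝ := Real.sqrt (M.l2P1 q q)

end Mesh

/-- The gradient (a constant vector) of an affine function on the plane. -/
def gradA (f : E2 →ᵃ[ℝ] ℝ) : E2 :=
  (InnerProductSpace.toDual ℝ E2).symm (LinearMap.toContinuousLinearMap f.linear)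

/-- The discrete gradient `∇_h q` of a piecewise affine function: the piecewise
constant field equal on each triangle to the gradient of the affine piece. -/
def gradh (q : Tri → (E2 →ᵃ[ℝ] ℝ)) : Tri → E2 := fun t => gradA (q t)

/-- The (constant) divergence of an affine vector field of the plane. -/
def divA (f : E2 →ᵃ[ℝ] E2) : ℝ := LinearMap.trace ℝ E2 f.linear

/-- The normal component `(u·n_{K,σ})_σ` of a piecewise affine field on the edge `σ`
of the triangle `t` (evaluated at the midpoint of `σ`). -/
def unrm (u : Tri → (E2 →ᵃ[ℝ] E2)) (t : Tri) (σ : E2 × E2) : ℝ :=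
  ⟪u t (emid σ), t.nrm σ⟫

namespace Mesh

variable {Ω : Set E2} (M : Mesh Ω)

/-- The norm `‖q‖_{1,h} = (|q|² + |∇_h q|²)^{1/2}` on `P₁^{nc}`. -/
def norm1h (q : Tri → (E2 →ᵃ[ℝ] ℝ)) : ℝ :=
  Real.sqrt ((M.l2normP1 q) ^ 2 + (M.l2normP0 (gradh q)) ^ 2)

/-- The prescribed value of `div_h v` at the midpoint of the edge `σ`. -/
def divhImage (v : Tri → E2) (σ : E2 × E2) : ℝ :=
  if (M.tris.filter fun t => t.hasEdge σ).card = 2 then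
    (3 * elen σ / ((M.Kof σ).area + (M.Lof σ).area)) *
      ⟪v (M.Lof σ) - v (M.Kof σ), (M.Kof σ).nrm σ⟫
  else
    -((3 * elen σ / (M.Kof σ).area) * ⟪v (M.Kof σ), (M.Kof σ).nrm σ⟫)

/-- `d = div_h v`: `d` is the element of `P₁^{nc}` taking the prescribed values at
the midpoints of the edges. -/
def IsDivh (v : Tri → E2) (d : Tri → (E2 →ᵃ[ℝ] ℝ)) : Prop :=
  M.IsP1nc d ∧
    ∀ t ∈ M.tris, ∀ σ ∈ M.edges, t.hasEdge σ → d t (emid σ) = M.divhImage v σ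

/-- The discrete Laplacian `Δ̃_h` on `P₀`. -/
def laph (v : Tri → E2) : Tri → E2 := fun t =>
  (t.area)⁻¹ •
    ((∑ σ ∈ M.intEdges.filter fun σ => t.hasEdge σ, M.tau σ • (v (M.other t σ) - v t))
      - ∑ σ ∈ M.extEdges.filter fun σ => t.hasEdge σ, M.tau σ • v t)

/-- The upwind convection operator `b̃_h(u_h, v_h) ∈ P₀`. -/
def btilde (u : Tri → (E2 →ᵃ[ℝ] E2)) (v : Tri → E2) : Tri → E2 := fun t =>
  (t.area)⁻¹ • ∑ σ ∈ M.intEdges.filter fun σ => t.hasEdge σ,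
    elen σ • (max (unrm u t σ) 0 • v t + min (unrm u t σ) 0 • v (M.other t σ))

/-- The trilinear form `b_h(u_h, v_h, w_h)`. -/
def bh (u : Tri → (E2 →ᵃ[ℝ] E2)) (v w : Tri → E2) : ℝ :=
  ∑ t ∈ M.tris, t.area * ⟪w t, M.btilde u v t⟫

/-- Membership in the lowest-order Raviart–Thomas space `RT₀`: the normal component is
constant on each edge of each triangle, matches across interior edges and vanishes on
boundary edges. -/
def IsRT0 (u : Tri → (E2 →ᵃ[ℝ] E2)) : Prop :=
  (∀ t ∈ M.tris, ∀ σ ∈ M.edges, t.hasEdge σ → ∀ x ∈ eseg σ,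
      ⟪u t x, t.nrm σ⟫ = unrm u t σ)
  ∧ (∀ σ ∈ M.intEdges,
      ⟪u (M.Kof σ) (emid σ), (M.Kof σ).nrm σ⟫ =
        ⟪u (M.Lof σ) (emid σ), (M.Kof σ).nrm σ⟫)
  ∧ (∀ σ ∈ M.extEdges, unrm u (M.Kof σ) σ = 0)

/-- Membership of a piecewise constant field in `P₀ ∩ RT₀`. -/
def IsRT0const (v : Tri → E2) : Prop :=
  (∀ σ ∈ M.intEdges, ⟪v (M.Lof σ) - v (M.Kof σ), (M.Kof σ).nrm σ⟫ = 0)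
  ∧ ∀ σ ∈ M.extEdges, ⟪v (M.Kof σ), (M.Kof σ).nrm σ⟫ = 0

/-- The `L²(Ω)` norm of a piecewise affine vector field. -/
def l2normRT (u : Tri → (E2 →ᵃ[ℝ] E2)) : ℝ :=
  Real.sqrt (∑ t ∈ M.tris, ∫ x in t.carrier, ‖u t x‖ ^ 2)

end Mesh

/-!
Write `a_{K,σ} = (u_h·n_{K,σ})_σ`. Since `a⁻ ≤ 0` and `⟪v_K, v_L⟫ ≤ (|v_K|² + |v_L|²)/2`,
each term `|σ|(a⁺|v_K|² + a⁻⟪v_K, v_L⟫)` of `b_h(u_h, v_h, v_h)` is at least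
`|v_K|²/2 · |σ| a + |σ|(a⁺|v_K|² + a⁻|v_L|²)/2`. The second parts cancel in pairs over each
interior edge, because `a_{L,σ} = -a_{K,σ}`: the two triangles lie on opposite sides of their
common edge (their interiors are disjoint), so their outward normals are opposite. The first
parts add up on each triangle to `|v_K|²/2 · |K| div u_h ≥ 0`: boundary edges carry no flux, and
for an affine field the midpoint rule computes the boundary flux exactly.
-/

open Filter Topology

lemma Finset.sum_eq_two_nsmul_sum_of_swap {α β : Type*} [AddCommMonoid β] {S T : Finset (α × α)}
    (hS : ∀ σ ∈ S, σ.swap ∉ S) (hT : ∀ σ, σ ∈ T ↔ σ ∈ S ∨ σ.swap ∈ S) (F : α × α → β)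
    (hF : ∀ σ ∈ S, F σ.swap = F σ) : ∑ σ ∈ T, F σ = 2 • ∑ σ ∈ S, F σ := by
  classical
  have hTS : T = S ∪ S.image Prod.swap := by
    ext σ
    rw [hT, Finset.mem_union, Finset.mem_image]
    refine or_congr_right ⟨fun h => ⟨_, h, σ.swap_swap⟩, ?_⟩
    rintro ⟨τ, hτ, rfl⟩
    rwa [τ.swap_swap]
  have hdisj : Disjoint S (S.image Prod.swap) := by
    refine Finset.disjoint_left.2 fun σ hσ h => ?_
    obtain ⟨τ, hτ, rfl⟩ := Finset.mem_image.1 h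
    exact hS τ hτ hσ
  rw [hTS, Finset.sum_union hdisj, Finset.sum_image Prod.swap_injective.injOn,
    Finset.sum_congr rfl hF, two_nsmul]

lemma sign_eq_neg_sign_of_mul_neg {α : Type*} [Ring α] [LinearOrder α] [IsStrictOrderedRing α]
    {a b : α} (h : a * b < 0) : (SignType.sign b : α) = -SignType.sign a := by
  rcases mul_neg_iff.1 h with ⟨ha, hb⟩ | ⟨ha, hb⟩ <;> simp [sign_pos, sign_neg, ha, hb]

lemma max_mul_add_min_mul_add_neg {α : Type*} [Ring α] [LinearOrder α] [IsOrderedRing α]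
    (a p q : α) :
    max a 0 * p + min a 0 * q + (max (-a) 0 * q + min (-a) 0 * p) = 0 := by
  rcases le_total a 0 with h | h <;> simp [h]

lemma upwind_lower_bound {F : Type*} [NormedAddCommGroup F] [InnerProductSpace ℝ F] {ℓ : ℝ}
    (hℓ : 0 ≤ ℓ) (a : ℝ) (x y : F) :
    ‖x‖ ^ 2 / 2 * (ℓ * a) + ℓ * (max a 0 * ‖x‖ ^ 2 + min a 0 * ‖y‖ ^ 2) / 2
      ≤ ℓ * (max a 0 * ‖x‖ ^ 2 + min a 0 * ⟪x, y⟫) := by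
  have hxy : ⟪x, y⟫ ≤ (‖x‖ ^ 2 + ‖y‖ ^ 2) / 2 := by
    nlinarith [norm_sub_sq_real x y, sq_nonneg ‖x - y‖]
  have hmin : min a 0 * ((‖x‖ ^ 2 + ‖y‖ ^ 2) / 2) ≤ min a 0 * ⟪x, y⟫ :=
    mul_le_mul_of_nonpos_left hxy (min_le_right a 0)
  have ha : ℓ * a = ℓ * max a 0 + ℓ * min a 0 := by rw [← mul_add, max_add_min, add_zero]
  rw [ha]
  linarith [mul_le_mul_of_nonneg_left hmin hℓ]

lemma eventually_pos_lineMap {a c : ℝ} (h : 0 < a ∨ a = 0 ∧ 0 < c) :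
    ∀ᶠ ε in 𝓝[>] (0 : ℝ), 0 < AffineMap.lineMap a c ε := by
  rcases h with ha | ⟨rfl, hc⟩
  · have := (AffineMap.lineMap_continuous (R := ℝ) (p := a) (q := c)).tendsto 0
    rw [AffineMap.lineMap_apply_zero] at this
    exact (this.eventually (lt_mem_nhds ha)).filter_mono nhdsWithin_le_nhds
  · filter_upwards [self_mem_nhdsWithin] with ε (hε : 0 < ε)
    rw [AffineMap.lineMap_apply_ring', sub_zero, add_zero]
    exact mul_pos hε hc

lemma fin3_eq_or_eq_of_ne {i j k m : Fin 3} (hij : i ≠ j) (hik : i ≠ k) (hjk : j ≠ k)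
    (hm : m ≠ k) : m = i ∨ m = j := by
  revert hij hik hjk hm; revert i j k m; decide

lemma fin3_sum_offDiag {β : Type*} [AddCommMonoid β] (G : Fin 3 × Fin 3 → β) :
    ∑ p ∈ Finset.univ.offDiag, G p
      = G (0, 1) + G (0, 2) + G (1, 0) + G (1, 2) + G (2, 0) + G (2, 1) := by
  rw [show (Finset.univ : Finset (Fin 3)).offDiag
      = {(0, 1), (0, 2), (1, 0), (1, 2), (2, 0), (2, 1)} by decide,
    Finset.sum_insert (by decide), Finset.sum_insert (by decide), Finset.sum_insert (by decide),
    Finset.sum_insert (by decide), Finset.sum_pair (by decide)]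
  simp only [add_assoc]

lemma fin3_exists_ne {i j : Fin 3} (hij : i ≠ j) : ∃ k, i ≠ k ∧ j ≠ k := by
  revert hij; revert i j; decide

def det2 (x y : E2) : ℝ := x 0 * y 1 - x 1 * y 0

lemma inner_perp (x y : E2) : ⟪perp x, y⟫ = det2 x y := by
  simp only [perp, det2, PiLp.continuousLinearEquiv_symm_apply, PiLp.inner_apply,
    RCLike.inner_apply, Real.ringHom_apply, Fin.sum_univ_two, Matrix.cons_val_zero,
    Matrix.cons_val_one, Matrix.cons_val_fin_one]
  ring

lemma det2_self (x : E2) : det2 x x = 0 := by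
  simp only [det2]; ring

lemma det2_sub_right (x y z : E2) : det2 x (y - z) = det2 x y - det2 x z := by
  simp only [det2, PiLp.sub_apply]; ring

lemma det2_perp_self (x : E2) : det2 x (perp x) = ‖x‖ ^ 2 := by
  simp only [perp, det2, PiLp.continuousLinearEquiv_symm_apply, Matrix.cons_val_zero,
    Matrix.cons_val_one, Matrix.cons_val_fin_one, EuclideanSpace.norm_sq_eq, Real.norm_eq_abs,
    sq_abs, Fin.sum_univ_two]
  ring

lemma det2_sum (x : E2) {ι : Type*} (s : Finset ι) (w : ι → ℝ) (y : ι → E2) :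
    det2 x (∑ i ∈ s, w i • y i) = ∑ i ∈ s, w i * det2 x (y i) := by
  simp only [← inner_perp, inner_sum, real_inner_smul_right]

lemma divA_eq (f : E2 →ᵃ[ℝ] E2) :
    divA f = f.linear (EuclideanSpace.single 0 1) 0 + f.linear (EuclideanSpace.single 1 1) 1 := by
  rw [divA, LinearMap.trace_eq_matrix_trace ℝ (EuclideanSpace.basisFun (Fin 2) ℝ).toBasis,
    Matrix.trace]
  simp [Matrix.diag, LinearMap.toMatrix_apply, Fin.sum_univ_two]

lemma AffineMap.apply_eq_add_coord (f : E2 →ᵃ[ℝ] E2) (x y : E2) (c : Fin 2) :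
    f y c = f x c + (y 0 - x 0) * f.linear (EuclideanSpace.single 0 1) c
      + (y 1 - x 1) * f.linear (EuclideanSpace.single 1 1) c := by
  have hy : y - x = (y 0 - x 0) • EuclideanSpace.single 0 1
      + (y 1 - x 1) • EuclideanSpace.single (1 : Fin 2) (1 : ℝ) := by
    ext m; fin_cases m <;> simp
  have := congrArg (· c) (f.linearMap_vsub y x)
  simp only [vsub_eq_sub, hy, map_add, map_smul, PiLp.sub_apply, PiLp.add_apply,
    PiLp.smul_apply, smul_eq_mul] at this
  linarith

-- The divergence theorem on the triangle `ABC`, whose signed area is `det2 (B - A) (C - A) / 2`.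
lemma det2_flux_eq (f : E2 →ᵃ[ℝ] E2) (A B C : E2) :
    det2 (B - A) (f (midpoint ℝ A B)) + det2 (C - B) (f (midpoint ℝ B C))
      + det2 (A - C) (f (midpoint ℝ C A)) = -(det2 (B - A) (C - A) / 2 * divA f) := by
  simp only [det2, f.apply_eq_add_coord A (midpoint ℝ A B),
    f.apply_eq_add_coord A (midpoint ℝ B C), f.apply_eq_add_coord A (midpoint ℝ C A)]
  simp only [divA_eq, PiLp.sub_apply, midpoint_eq_smul_add, PiLp.smul_apply, PiLp.add_apply,
    smul_eq_mul, invOf_eq_inv]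
  ring

namespace AffineBasis

variable (b : AffineBasis (Fin 3) ℝ E2) {i j k : Fin 3}

lemma det2_sub_eq_coord_mul (hij : i ≠ j) (hik : i ≠ k) (hjk : j ≠ k) (x : E2) :
    det2 (b j - b i) (x - b i) = b.coord k x * det2 (b j - b i) (b k - b i) := by
  have hx : x - b i = ∑ m, b.coord m x • (b m - b i) := by
    simp only [smul_sub, Finset.sum_sub_distrib, b.linear_combination_coord_eq_self,
      ← Finset.sum_smul, b.sum_coord_apply_eq_one, one_smul]
  rw [hx, det2_sum, Finset.sum_eq_single k]
  · intro m _ hm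
    rcases fin3_eq_or_eq_of_ne hij hik hjk hm with rfl | rfl
    · simp [det2]
    · rw [det2_self, mul_zero]
  · simp

lemma det2_ne_zero (hij : i ≠ j) (hik : i ≠ k) (hjk : j ≠ k) :
    det2 (b j - b i) (b k - b i) ≠ 0 := by
  intro h
  have := b.det2_sub_eq_coord_mul hij hik hjk (b i + perp (b j - b i))
  rw [h, mul_zero, add_sub_cancel_left, det2_perp_self] at this
  exact pow_ne_zero 2 (norm_ne_zero_iff.mpr (sub_ne_zero.mpr (b.ind.injective.ne hij.symm))) this

lemma coord_midpoint (m : Fin 3) :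
    b.coord m (midpoint ℝ (b i) (b j)) = (b.coord m (b i) + b.coord m (b j)) / 2 := by
  rw [AffineMap.map_midpoint, midpoint_eq_smul_add, smul_eq_mul, invOf_eq_inv]; ring

end AffineBasis

namespace Tri

variable (t : Tri) {i j k : Fin 3}

def basis : AffineBasis (Fin 3) ℝ E2 :=
  ⟨t.vtx, t.indep, t.indep.affineSpan_eq_top_iff_card_eq_finrank_add_one.mpr (by simp)⟩

lemma coe_basis : ⇑t.basis = t.vtx := rfl

lemma interior_carrier : interior t.carrier = {x | ∀ m, 0 < t.basis.coord m x} := by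
  rw [carrier, ← t.coe_basis, t.basis.interior_convexHull]

lemma area_pos : 0 < t.area := by
  have hne : (interior t.carrier).Nonempty := by
    rw [carrier, ← t.coe_basis]
    exact ⟨_, t.basis.centroid_mem_interior_convexHull⟩
  have hfin : volume t.carrier ≠ ⊤ :=
    ((Set.finite_range t.vtx).isCompact_convexHull (𝕜 := ℝ)).measure_lt_top.ne
  exact ENNReal.toReal_pos (Measure.measure_pos_of_nonempty_interior volume hne).ne' hfin

lemma exists_eq_of_hasEdge {σ : E2 × E2} (h : t.hasEdge σ) :
    ∃ i j k, i ≠ j ∧ i ≠ k ∧ j ≠ k ∧ σ = (t.vtx i, t.vtx j) := by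
  obtain ⟨hne, ⟨i, hi⟩, ⟨j, hj⟩⟩ := h
  have hij : i ≠ j := by rintro rfl; exact hne (hi ▸ hj)
  obtain ⟨k, hik, hjk⟩ := fin3_exists_ne hij
  exact ⟨i, j, k, hij, hik, hjk, by rw [hi, hj]⟩

lemma eventually_lineMap_midpoint_mem_interior (hij : i ≠ j) (hik : i ≠ k) (hjk : j ≠ k)
    {c : E2} (hc : 0 < t.basis.coord k c) :
    ∀ᶠ ε in 𝓝[>] (0 : ℝ),
      AffineMap.lineMap (midpoint ℝ (t.vtx i) (t.vtx j)) c ε ∈ interior t.carrier := by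
  simp only [interior_carrier, Set.mem_ofPred_eq, AffineMap.apply_lineMap]
  refine eventually_all.2 fun m => eventually_pos_lineMap ?_
  rw [← t.coe_basis, t.basis.coord_midpoint]
  by_cases hm : m = k
  · subst hm
    rw [t.basis.coord_apply_ne hik.symm, t.basis.coord_apply_ne hjk.symm]
    exact Or.inr ⟨by norm_num, hc⟩
  · left
    rcases fin3_eq_or_eq_of_ne hij hik hjk hm with rfl | rfl
    · rw [t.basis.coord_apply_eq, t.basis.coord_apply_ne hij]; norm_num
    · rw [t.basis.coord_apply_eq, t.basis.coord_apply_ne hij.symm]; norm_num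

-- Otherwise the points just off the midpoint of the common edge, towards the third vertex of `K`,
-- would lie in both interiors.
lemma det2_mul_det2_neg_of_disjoint {K L : Tri}
    (hKL : interior K.carrier ∩ interior L.carrier = ∅) {i j k i' j' k' : Fin 3}
    (hij : i ≠ j) (hik : i ≠ k) (hjk : j ≠ k) (hij' : i' ≠ j') (hik' : i' ≠ k') (hjk' : j' ≠ k')
    (hi : L.vtx i' = K.vtx i) (hj : L.vtx j' = K.vtx j) :
    det2 (K.vtx j - K.vtx i) (K.vtx k - K.vtx i)
      * det2 (K.vtx j - K.vtx i) (L.vtx k' - K.vtx i) < 0 := by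
  have hK := K.basis.det2_ne_zero hij hik hjk
  have hL := L.basis.det2_ne_zero hij' hik' hjk'
  simp only [coe_basis, hi, hj] at hK hL
  by_contra hpos
  replace hpos := lt_of_le_of_ne (not_lt.mp hpos) (mul_ne_zero hK hL).symm
  have hc : 0 < L.basis.coord k' (K.vtx k) := by
    have h := L.basis.det2_sub_eq_coord_mul hij' hik' hjk' (K.vtx k)
    simp only [coe_basis, hi, hj] at h
    rw [h, mul_assoc] at hpos
    exact pos_of_mul_pos_left hpos (mul_self_nonneg _)
  have hKin := K.eventually_lineMap_midpoint_mem_interior hij hik hjk (c := K.vtx k)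
    (by rw [← K.coe_basis, K.basis.coord_apply_eq]; exact one_pos)
  have hLin := L.eventually_lineMap_midpoint_mem_interior hij' hik' hjk' hc
  rw [hi, hj] at hLin
  obtain ⟨ε, hεK, hεL⟩ := (hKin.and hLin).exists
  exact Set.eq_empty_iff_forall_notMem.mp hKL _ ⟨hεK, hεL⟩

lemma inner_perp_emid_sub_centroid (hij : i ≠ j) (hik : i ≠ k) (hjk : j ≠ k) :
    ⟪perp (t.vtx j - t.vtx i), emid (t.vtx i, t.vtx j) - t.centroid⟫
      = -det2 (t.vtx j - t.vtx i) (t.vtx k - t.vtx i) / 3 := by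
  have hmid : t.basis.coord k (midpoint ℝ (t.vtx i) (t.vtx j)) = 0 := by
    rw [← t.coe_basis, t.basis.coord_midpoint, t.basis.coord_apply_ne hik.symm,
      t.basis.coord_apply_ne hjk.symm]
    norm_num
  have hcen : t.basis.coord k t.centroid = 3⁻¹ := by
    rw [centroid, ← t.coe_basis, t.basis.coord_apply_centroid (Finset.mem_univ k)]
    simp
  have hx := t.basis.det2_sub_eq_coord_mul hij hik hjk
  simp only [coe_basis] at hx
  rw [inner_perp, show emid (t.vtx i, t.vtx j) - t.centroid
      = (midpoint ℝ (t.vtx i) (t.vtx j) - t.vtx i) - (t.centroid - t.vtx i) by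
    rw [sub_sub_sub_cancel_right]; rfl, det2_sub_right, hx, hx t.centroid, hmid, hcen]
  ring

lemma elen_smul_nrm (hij : i ≠ j) (hik : i ≠ k) (hjk : j ≠ k) :
    elen (t.vtx i, t.vtx j) • t.nrm (t.vtx i, t.vtx j)
      = -(SignType.sign (det2 (t.vtx j - t.vtx i) (t.vtx k - t.vtx i)) : ℝ)
          • perp (t.vtx j - t.vtx i) := by
  have hd := t.basis.det2_ne_zero hij hik hjk
  have hl : elen (t.vtx i, t.vtx j) ≠ 0 := dist_ne_zero.2 (t.indep.injective.ne hij)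
  rw [nrm, t.inner_perp_emid_sub_centroid hij hik hjk]
  simp only [coe_basis] at hd
  rcases hd.lt_or_gt with h | h
  · rw [if_pos (by linarith), sign_neg h, smul_inv_smul₀ hl]; simp
  · rw [if_neg (by linarith), sign_pos h, smul_neg, smul_inv_smul₀ hl]; simp

lemma nrm_eq_neg_of_disjoint {K L : Tri} (hKL : interior K.carrier ∩ interior L.carrier = ∅)
    {σ : E2 × E2} (hK : K.hasEdge σ) (hL : L.hasEdge σ) : L.nrm σ = -K.nrm σ := by
  obtain ⟨i, j, k, hij, hik, hjk, rfl⟩ := K.exists_eq_of_hasEdge hK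
  obtain ⟨i', j', k', hij', hik', hjk', hσ⟩ := L.exists_eq_of_hasEdge hL
  obtain ⟨hi, hj⟩ := Prod.mk.inj hσ
  have hsK := K.elen_smul_nrm hij hik hjk
  have hsL := L.elen_smul_nrm hij' hik' hjk'
  rw [← hi, ← hj] at hsL
  have hl : elen (K.vtx i, K.vtx j) ≠ 0 := dist_ne_zero.2 (K.indep.injective.ne hij)
  apply smul_right_injective E2 hl
  simp only [smul_neg, hsK, hsL, sign_eq_neg_sign_of_mul_neg
    (det2_mul_det2_neg_of_disjoint hKL hij hik hjk hij' hik' hjk' hi.symm hj.symm), neg_smul,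
    neg_neg]

variable (u : Tri → (E2 →ᵃ[ℝ] E2))

lemma elen_mul_unrm (hij : i ≠ j) (hik : i ≠ k) (hjk : j ≠ k) :
    elen (t.vtx i, t.vtx j) * unrm u t (t.vtx i, t.vtx j)
      = -(SignType.sign (det2 (t.vtx j - t.vtx i) (t.vtx k - t.vtx i)) : ℝ)
          * det2 (t.vtx j - t.vtx i) (u t (midpoint ℝ (t.vtx i) (t.vtx j))) := by
  rw [unrm, ← real_inner_smul_right, t.elen_smul_nrm hij hik hjk, real_inner_smul_right,
    real_inner_comm, inner_perp]
  rfl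

lemma elen_mul_unrm_swap (i j : Fin 3) :
    elen (t.vtx j, t.vtx i) * unrm u t (t.vtx j, t.vtx i)
      = elen (t.vtx i, t.vtx j) * unrm u t (t.vtx i, t.vtx j) := by
  rcases eq_or_ne i j with rfl | hij
  · rfl
  obtain ⟨k, hik, hjk⟩ := fin3_exists_ne hij
  have hd : det2 (t.vtx i - t.vtx j) (t.vtx k - t.vtx j)
      = -det2 (t.vtx j - t.vtx i) (t.vtx k - t.vtx i) := by
    simp only [det2, PiLp.sub_apply]; ring
  have hw : ∀ w, det2 (t.vtx i - t.vtx j) w = -det2 (t.vtx j - t.vtx i) w := by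
    intro w; simp only [det2, PiLp.sub_apply]; ring
  rw [t.elen_mul_unrm u hij.symm hjk hik, t.elen_mul_unrm u hij hik hjk, midpoint_comm, hd, hw,
    Left.sign_neg]
  push_cast
  ring

lemma sum_elen_mul_unrm :
    elen (t.vtx 0, t.vtx 1) * unrm u t (t.vtx 0, t.vtx 1)
      + elen (t.vtx 1, t.vtx 2) * unrm u t (t.vtx 1, t.vtx 2)
      + elen (t.vtx 2, t.vtx 0) * unrm u t (t.vtx 2, t.vtx 0)
      = |det2 (t.vtx 1 - t.vtx 0) (t.vtx 2 - t.vtx 0)| / 2 * divA (u t) := by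
  have h12 : det2 (t.vtx 2 - t.vtx 1) (t.vtx 0 - t.vtx 1)
      = det2 (t.vtx 1 - t.vtx 0) (t.vtx 2 - t.vtx 0) := by
    simp only [det2, PiLp.sub_apply]; ring
  have h20 : det2 (t.vtx 0 - t.vtx 2) (t.vtx 1 - t.vtx 2)
      = det2 (t.vtx 1 - t.vtx 0) (t.vtx 2 - t.vtx 0) := by
    simp only [det2, PiLp.sub_apply]; ring
  rw [t.elen_mul_unrm u (k := 2) (by decide) (by decide) (by decide),
    t.elen_mul_unrm u (k := 0) (by decide) (by decide) (by decide),
    t.elen_mul_unrm u (k := 1) (by decide) (by decide) (by decide), h12, h20, ← mul_add,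
    ← mul_add, det2_flux_eq, ← sign_mul_self]
  ring

end Tri

namespace Mesh

variable {Ω : Set E2} (M : Mesh Ω) (u : Tri → (E2 →ᵃ[ℝ] E2)) {σ : E2 × E2}

lemma mem_intEdges_or_mem_extEdges (hσ : σ ∈ M.edges) : σ ∈ M.intEdges ∨ σ ∈ M.extEdges := by
  obtain ⟨t, ht, he⟩ := M.edges_sub σ hσ
  have hpos : 0 < (M.tris.filter fun t => t.hasEdge σ).card :=
    Finset.card_pos.mpr ⟨t, Finset.mem_filter.mpr ⟨ht, he⟩⟩
  have hle := M.edges_atMostTwo σ hσ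
  simp only [intEdges, extEdges, Finset.mem_filter, hσ, true_and]
  omega

lemma Lof_ne_Kof (hσ : σ ∈ M.intEdges) : M.Lof σ ≠ M.Kof σ :=
  (M.Lof_mem σ (Finset.mem_filter.mp hσ).1 (Finset.mem_filter.mp hσ).2).2.2

lemma filter_hasEdge_of_mem_intEdges (hσ : σ ∈ M.intEdges) :
    M.tris.filter (fun t => t.hasEdge σ) = {M.Lof σ, M.Kof σ} := by
  obtain ⟨hσe, hcard⟩ := Finset.mem_filter.mp hσ
  obtain ⟨hK, hKσ⟩ := M.Kof_mem σ hσe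
  obtain ⟨hL, hLσ, hLK⟩ := M.Lof_mem σ hσe hcard
  refine (Finset.eq_of_subset_of_card_le ?_ ?_).symm
  · simp [Finset.insert_subset_iff, hK, hKσ, hL, hLσ]
  · rw [hcard, Finset.card_pair hLK]

lemma eq_Kof_of_mem_extEdges (hσ : σ ∈ M.extEdges) {t : Tri} (ht : t ∈ M.tris)
    (he : t.hasEdge σ) : t = M.Kof σ := by
  obtain ⟨hσe, hcard⟩ := Finset.mem_filter.mp hσ
  obtain ⟨hK, hKσ⟩ := M.Kof_mem σ hσe
  exact Finset.card_le_one.mp hcard.le _ (Finset.mem_filter.mpr ⟨ht, he⟩) _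
    (Finset.mem_filter.mpr ⟨hK, hKσ⟩)

lemma other_Kof : M.other (M.Kof σ) σ = M.Lof σ := if_pos rfl

lemma other_Lof (hσ : σ ∈ M.intEdges) : M.other (M.Lof σ) σ = M.Kof σ :=
  if_neg fun h => M.Lof_ne_Kof hσ h.symm

lemma unrm_Lof (hu : M.IsRT0 u) (hσ : σ ∈ M.intEdges) :
    unrm u (M.Lof σ) σ = -unrm u (M.Kof σ) σ := by
  obtain ⟨hσe, hcard⟩ := Finset.mem_filter.mp hσ
  obtain ⟨hK, hKσ⟩ := M.Kof_mem σ hσe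
  obtain ⟨hL, hLσ, hLK⟩ := M.Lof_mem σ hσe hcard
  have hnrm := Tri.nrm_eq_neg_of_disjoint (M.interior_disjoint _ hK _ hL (Ne.symm hLK)) hKσ hLσ
  rw [unrm, unrm, hnrm, inner_neg_right, hu.2.1 σ hσ]

lemma sum_tris_sum_intEdges (f : Tri → E2 × E2 → ℝ) :
    ∑ t ∈ M.tris, ∑ σ ∈ M.intEdges.filter (fun σ => t.hasEdge σ), f t σ
      = ∑ σ ∈ M.intEdges, (f (M.Kof σ) σ + f (M.Lof σ) σ) := by
  rw [Finset.sum_comm' (t' := M.intEdges) (s' := fun σ => M.tris.filter fun t => t.hasEdge σ)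
    (by simp only [Finset.mem_filter]; tauto)]
  refine Finset.sum_congr rfl fun σ hσ => ?_
  rw [M.filter_hasEdge_of_mem_intEdges hσ, Finset.sum_pair (M.Lof_ne_Kof hσ), add_comm]

lemma sum_upwind_eq_zero (hu : M.IsRT0 u) (f : Tri → ℝ) :
    ∑ t ∈ M.tris, ∑ σ ∈ M.intEdges.filter (fun σ => t.hasEdge σ),
      elen σ * (max (unrm u t σ) 0 * f t + min (unrm u t σ) 0 * f (M.other t σ)) = 0 := by
  rw [M.sum_tris_sum_intEdges]
  refine Finset.sum_eq_zero fun σ hσ => ?_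
  rw [M.other_Kof, M.other_Lof hσ, M.unrm_Lof u hu hσ, ← mul_add,
    max_mul_add_min_mul_add_neg, mul_zero]

-- Each side of `t` is registered in `M.edges` in exactly one orientation.
lemma mem_image_offDiag_iff {t : Tri} (ht : t ∈ M.tris) (σ : E2 × E2) :
    σ ∈ Finset.univ.offDiag.image (Prod.map t.vtx t.vtx)
      ↔ σ ∈ M.edges.filter (fun σ => t.hasEdge σ)
        ∨ σ.swap ∈ M.edges.filter (fun σ => t.hasEdge σ) := by
  have hmem : ∀ i j, i ≠ j → (t.vtx i, t.vtx j) ∈ M.edges →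
      (t.vtx i, t.vtx j) ∈ M.edges.filter (fun σ => t.hasEdge σ) :=
    fun i j hij he => Finset.mem_filter.mpr ⟨he, t.indep.injective.ne hij, ⟨i, rfl⟩, ⟨j, rfl⟩⟩
  simp only [Finset.mem_image, Finset.mem_offDiag, Finset.mem_univ, true_and, Prod.exists,
    Prod.map_apply]
  constructor
  · rintro ⟨i, j, hij, rfl⟩
    exact (M.edges_cover t ht i j hij).imp (hmem i j hij) (hmem j i (Ne.symm hij))
  · rintro (hσ | hσ)
    · obtain ⟨i, j, -, hij, -, -, rfl⟩ := t.exists_eq_of_hasEdge (Finset.mem_filter.mp hσ).2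
      exact ⟨i, j, hij, rfl⟩
    · obtain ⟨i, j, -, hij, -, -, h⟩ := t.exists_eq_of_hasEdge (Finset.mem_filter.mp hσ).2
      exact ⟨j, i, Ne.symm hij, by rw [← Prod.swap_swap σ, h]; rfl⟩

lemma sum_edges_hasEdge {t : Tri} (ht : t ∈ M.tris) (F : E2 × E2 → ℝ)
    (hF : ∀ i j, F (t.vtx j, t.vtx i) = F (t.vtx i, t.vtx j)) :
    ∑ σ ∈ M.edges.filter (fun σ => t.hasEdge σ), F σ
      = F (t.vtx 0, t.vtx 1) + F (t.vtx 1, t.vtx 2) + F (t.vtx 2, t.vtx 0) := by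
  have hS : ∀ σ ∈ M.edges.filter (fun σ => t.hasEdge σ),
      σ.swap ∉ M.edges.filter (fun σ => t.hasEdge σ) := fun σ hσ hσ' =>
    M.edges_orient σ (Finset.mem_filter.mp hσ).1 (Finset.mem_filter.mp hσ').1
  have hFS : ∀ σ ∈ M.edges.filter (fun σ => t.hasEdge σ), F σ.swap = F σ := by
    intro σ hσ
    obtain ⟨i, j, -, -, -, -, rfl⟩ := t.exists_eq_of_hasEdge (Finset.mem_filter.mp hσ).2
    exact hF i j
  have key := Finset.sum_eq_two_nsmul_sum_of_swap hS (M.mem_image_offDiag_iff ht) F hFS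
  rw [Finset.sum_image (t.indep.injective.prodMap t.indep.injective).injOn, fin3_sum_offDiag,
    two_nsmul] at key
  simp only [Prod.map_apply] at key
  linarith [hF 0 1, hF 1 2, hF 2 0]

lemma sum_intEdges_elen_mul_unrm (hu : M.IsRT0 u) {t : Tri} (ht : t ∈ M.tris) :
    ∑ σ ∈ M.intEdges.filter (fun σ => t.hasEdge σ), elen σ * unrm u t σ
      = |det2 (t.vtx 1 - t.vtx 0) (t.vtx 2 - t.vtx 0)| / 2 * divA (u t) := by
  rw [← t.sum_elen_mul_unrm u, ← M.sum_edges_hasEdge ht (fun σ => elen σ * unrm u t σ)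
    (t.elen_mul_unrm_swap u)]
  refine Finset.sum_subset (Finset.filter_subset_filter _ (Finset.filter_subset _ _))
    fun σ hσ hσi => ?_
  obtain ⟨hσe, hσt⟩ := Finset.mem_filter.mp hσ
  have hext := (M.mem_intEdges_or_mem_extEdges hσe).resolve_left
    fun h => hσi (Finset.mem_filter.mpr ⟨h, hσt⟩)
  rw [M.eq_Kof_of_mem_extEdges hext ht hσt, hu.2.2 σ hext, mul_zero]

lemma bh_self_eq (v : Tri → E2) :
    M.bh u v v = ∑ t ∈ M.tris, ∑ σ ∈ M.intEdges.filter (fun σ => t.hasEdge σ),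
      elen σ * (max (unrm u t σ) 0 * ‖v t‖ ^ 2 + min (unrm u t σ) 0 * ⟪v t, v (M.other t σ)⟫) := by
  refine Finset.sum_congr rfl fun t _ => ?_
  rw [btilde, real_inner_smul_right, mul_inv_cancel_left₀ t.area_pos.ne', inner_sum]
  simp only [real_inner_smul_right, inner_add_right, real_inner_self_eq_norm_sq]

end Mesh

theorem upwind_convection_nonneg_general
    {Ω : Set E2} (M : Mesh Ω) (u : Tri → (E2 →ᵃ[ℝ] E2)) (hu : M.IsRT0 u)
    (hdiv : ∀ t ∈ M.tris, 0 ≤ divA (u t)) (v : Tri → E2) :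
    0 ≤ M.bh u v v := by
  have hcancel := M.sum_upwind_eq_zero u hu (fun t => ‖v t‖ ^ 2)
  rw [M.bh_self_eq]
  calc (0 : ℝ)
      ≤ ∑ t ∈ M.tris, ‖v t‖ ^ 2 / 2
          * ∑ σ ∈ M.intEdges.filter (fun σ => t.hasEdge σ), elen σ * unrm u t σ := by
        refine Finset.sum_nonneg fun t ht => mul_nonneg (by positivity) ?_
        rw [M.sum_intEdges_elen_mul_unrm u hu ht]
        exact mul_nonneg (by positivity) (hdiv t ht)
    _ = ∑ t ∈ M.tris, ∑ σ ∈ M.intEdges.filter (fun σ => t.hasEdge σ),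
          (‖v t‖ ^ 2 / 2 * (elen σ * unrm u t σ) + elen σ * (max (unrm u t σ) 0 * ‖v t‖ ^ 2
            + min (unrm u t σ) 0 * ‖v (M.other t σ)‖ ^ 2) / 2) := by
        simp only [Finset.sum_add_distrib, ← Finset.sum_div, hcancel, Finset.mul_sum]
        ring
    _ ≤ _ := Finset.sum_le_sum fun t _ => Finset.sum_le_sum fun σ _ =>
        upwind_lower_bound dist_nonneg _ _ _

/-- **Positivity of the upwind convection operator**: if `u_h ∈ RT₀` has nonnegative
(constant) divergence on each triangle, then `b_h(u_h, v_h, v_h) ≥ 0` for all `v_h ∈ P₀`. -/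
theorem upwind_convection_nonneg
    {Ω : Set E2} (hΩo : IsOpen Ω) (hΩc : IsConnected Ω) (hΩb : Bornology.IsBounded Ω)
    (M : Mesh Ω) (u : Tri → (E2 →ᵃ[ℝ] E2)) (hu : M.IsRT0 u)
    (hdiv : ∀ t ∈ M.tris, 0 ≤ divA (u t)) (v : Tri → E2) :
    0 ≤ M.bh u v v :=
  upwind_convection_nonneg_general M u hu hdiv v

end
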